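/- Let C₀ > 0 and set k̂ = 3/(4αC₀²). For every k ∈ (0, k̂] and every v ∈ ℝ with |v| ≤ C₀, one has |G⁻¹(v)| ≤ (αk)^{−1/2}; in particular, if a function v satisfies ‖v‖_∞ ≤ C₀ then ‖G⁻¹∘v‖_∞ ≤ (αk)^{−1/2}. -/

import Mathlib

open Real Filter Set

/-- The constant α = (9+3√5)/2. -/
noncomputable def alph : ℝ := (9 + 3 * Real.sqrt 5) / 2

/-- The constant β = 2 α^{3/2} √(α−1). -/
noncomputable def bet : ℝ := 2 * alph ^ ((3 : ℝ) / 2) * Real.sqrt (alph - 1)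

/-- The change-of-variable function g (extended evenly to negative arguments):
g(s) = √(1 − k s²) for |s| < (αk)^{−1/2}, and g(s) = 1/(βk s²) + √3/2 for |s| ≥ (αk)^{−1/2}. -/
noncomputable def g (k s : ℝ) : ℝ :=
  if |s| < 1 / Real.sqrt (alph * k) then Real.sqrt (1 - k * s ^ 2)
  else 1 / (bet * k * s ^ 2) + Real.sqrt 3 / 2

/-- G(t) = ∫₀ᵗ g(s) ds. -/
noncomputable def G (k t : ℝ) : ℝ := ∫ s in (0 : ℝ)..t, g k s

/-! On `[-(αk)^{-1/2}, (αk)^{-1/2}]` the integrand is `√(1 - k s²) ≥ √(1 - 1/α) ≥ √3/2` because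
`α > 4`, and outside it exceeds `√3/2` outright. Hence `|G t| ≥ (√3/2)|t|`, so
`|G⁻¹ v| ≤ (2/√3)|v| ≤ (2/√3) C₀`, and `k ≤ k̂` is exactly the condition
`(2/√3) C₀ ≤ (αk)^{-1/2}`. -/

open MeasureTheory

lemma four_lt_alph : (4 : ℝ) < alph := by
  have : (2 : ℝ) < √5 := by
    rw [show (2 : ℝ) = √(2 ^ 2) by simp]
    exact Real.sqrt_lt_sqrt (by norm_num) (by norm_num)
  unfold alph
  linarith

lemma alph_pos : 0 < alph := by linarith [four_lt_alph]

lemma bet_pos : 0 < bet := by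
  have hsqrt : 0 < √(alph - 1) := Real.sqrt_pos.mpr (by linarith [four_lt_alph])
  have hrpow : 0 < alph ^ ((3 : ℝ) / 2) := Real.rpow_pos_of_pos alph_pos _
  unfold bet
  positivity

lemma abs_lt_one_div_sqrt_iff {x s : ℝ} (hx : 0 < x) : |s| < 1 / √x ↔ x * s ^ 2 < 1 := by
  rw [one_div, ← Real.sqrt_inv, Real.lt_sqrt (abs_nonneg s), sq_abs, ← one_div, lt_div_iff₀' hx]

section g

variable {k : ℝ} (hk : 0 < k) (s : ℝ)
include hk

lemma sqrt_three_div_two_le_g : √3 / 2 ≤ g k s := by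
  unfold g
  split_ifs with hs
  · rw [abs_lt_one_div_sqrt_iff (mul_pos alph_pos hk)] at hs
    rw [show √3 / 2 = √(3 / 4) by rw [Real.sqrt_div' _ (by norm_num : (0 : ℝ) ≤ 4)]; norm_num]
    apply Real.sqrt_le_sqrt
    nlinarith [four_lt_alph, mul_nonneg hk.le (sq_nonneg s)]
  · have := bet_pos
    have : 0 ≤ 1 / (bet * k * s ^ 2) := by positivity
    linarith

lemma g_le : g k s ≤ 1 + alph / bet + √3 / 2 := by
  have hβ := bet_pos
  unfold g
  split_ifs with hs
  · have : √(1 - k * s ^ 2) ≤ 1 := Real.sqrt_le_one.mpr (by nlinarith)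
    have : 0 ≤ alph / bet := div_nonneg alph_pos.le hβ.le
    linarith [Real.sqrt_nonneg 3]
  · rw [abs_lt_one_div_sqrt_iff (mul_pos alph_pos hk), not_lt] at hs
    have hs0 : 0 < k * s ^ 2 := by nlinarith [alph_pos]
    have : 1 / (bet * k * s ^ 2) ≤ alph / bet := by
      rw [div_le_div_iff₀ (by rw [mul_assoc]; exact mul_pos hβ hs0) hβ]
      nlinarith
    linarith

end g

lemma measurable_g (k : ℝ) : Measurable (g k) :=
  Measurable.ite (measurableSet_lt measurable_abs measurable_const) (by fun_prop) (by fun_prop)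

lemma intervalIntegrable_g {k : ℝ} (hk : 0 < k) (a b : ℝ) :
    IntervalIntegrable (g k) volume a b := by
  rw [intervalIntegrable_iff]
  refine Measure.integrableOn_of_bounded measure_Ioc_lt_top.ne
    (measurable_g k).aestronglyMeasurable (M := 1 + alph / bet + √3 / 2) (ae_of_all _ fun s => ?_)
  rw [Real.norm_eq_abs, abs_of_nonneg ((by positivity : (0 : ℝ) ≤ √3 / 2).trans
    (sqrt_three_div_two_le_g hk s))]
  exact g_le hk s

lemma mul_abs_le_abs_integral_of_le {f : ℝ → ℝ} {c t : ℝ}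
    (hf : IntervalIntegrable f volume 0 t) (hcf : ∀ s, c ≤ f s) :
    c * |t| ≤ |∫ s in (0 : ℝ)..t, f s| := by
  rcases le_total 0 t with ht | ht
  · have := intervalIntegral.integral_mono_on ht intervalIntegrable_const hf (fun s _ => hcf s)
    rw [intervalIntegral.integral_const, smul_eq_mul, sub_zero, mul_comm] at this
    rw [abs_of_nonneg ht]
    exact this.trans (le_abs_self _)
  · have := intervalIntegral.integral_mono_on ht intervalIntegrable_const hf.symm
      (fun s _ => hcf s)
    rw [intervalIntegral.integral_const, smul_eq_mul, zero_sub, mul_comm,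
      intervalIntegral.integral_symm] at this
    rw [abs_of_nonpos ht]
    exact this.trans (neg_le_abs _)

lemma sqrt_three_div_two_mul_abs_le_abs_G {k : ℝ} (hk : 0 < k) (t : ℝ) :
    √3 / 2 * |t| ≤ |G k t| :=
  mul_abs_le_abs_integral_of_le (intervalIntegrable_g hk 0 t) (sqrt_three_div_two_le_g hk)

lemma abs_le_one_div_sqrt_of_sqrt_three_div_two_mul_abs_le {a u v C : ℝ} (ha : 0 < a)
    (huv : √3 / 2 * |u| ≤ |v|) (hv : |v| ≤ C) (haC : a * C ^ 2 ≤ 3 / 4) : |u| ≤ 1 / √a := by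
  rw [one_div, ← Real.sqrt_inv]
  apply Real.abs_le_sqrt
  rw [← one_div, le_div_iff₀' ha]
  have hu : 3 / 4 * u ^ 2 ≤ C ^ 2 := by
    have h3 : √3 ^ 2 = 3 := Real.sq_sqrt (by norm_num)
    have := pow_le_pow_left₀ (by positivity) (huv.trans hv) 2
    rw [mul_pow, div_pow, h3, sq_abs] at this
    linarith
  nlinarith

theorem stmt19_general (C₀ : ℝ) :
    ∀ k : ℝ, 0 < k → k ≤ 3 / (4 * alph * C₀ ^ 2) →
      ∀ Ginv : ℝ → ℝ, Function.LeftInverse Ginv (G k) →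
        Function.RightInverse Ginv (G k) →
        (∀ v : ℝ, |v| ≤ C₀ → |Ginv v| ≤ 1 / Real.sqrt (alph * k)) ∧
        ∀ (X : Type) (v : X → ℝ), (∀ x, |v x| ≤ C₀) →
          ∀ x, |Ginv (v x)| ≤ 1 / Real.sqrt (alph * k) := by
  intro k hk hk_le Ginv _ hright
  have hkC : alph * k * C₀ ^ 2 ≤ 3 / 4 := by
    have h4α : 0 ≤ 4 * alph := by linarith [alph_pos]
    have := mul_le_of_le_div₀ (by norm_num) (mul_nonneg h4α (sq_nonneg C₀)) hk_le
    linarith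
  have bound (v : ℝ) (hv : |v| ≤ C₀) : |Ginv v| ≤ 1 / √(alph * k) := by
    have := sqrt_three_div_two_mul_abs_le_abs_G hk (Ginv v)
    rw [hright v] at this
    exact abs_le_one_div_sqrt_of_sqrt_three_div_two_mul_abs_le (mul_pos alph_pos hk) this hv hkC
  exact ⟨bound, fun _ v hv x => bound (v x) (hv x)⟩

/-- For C₀ > 0 and k̂ = 3/(4αC₀²): for every k ∈ (0, k̂] and every v with |v| ≤ C₀,
|G⁻¹(v)| ≤ (αk)^{−1/2}; in particular, for any function v with ‖v‖_∞ ≤ C₀ one has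
‖G⁻¹∘v‖_∞ ≤ (αk)^{−1/2}. -/
theorem stmt19 (C₀ : ℝ) (hC₀ : 0 < C₀) :
    ∀ k : ℝ, 0 < k → k ≤ 3 / (4 * alph * C₀ ^ 2) →
      ∀ Ginv : ℝ → ℝ, Function.LeftInverse Ginv (G k) →
        Function.RightInverse Ginv (G k) →
        (∀ v : ℝ, |v| ≤ C₀ → |Ginv v| ≤ 1 / Real.sqrt (alph * k)) ∧
        ∀ (X : Type) (v : X → ℝ), (∀ x, |v x| ≤ C₀) →
          ∀ x, |Ginv (v x)| ≤ 1 / Real.sqrt (alph * k) :=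
  stmt19_general C₀
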